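/- arXiv:1603.04911 — 4 statements merged into one kernel-verified Lean document; each statement's English description precedes it below -/
import Mathlib

section
/- Let d ≥ 1, n = m − d, and let i be an index with d − 1 ≤ i ≤ n. For every t with τ_i ≤ t < τ_{i+1}, the B-spline curve z(t) = Σ_{j=0}^{n} B_{j,d}(t)·p_j lies in the convex hull of the d consecutive control points p_{i−d+1}, …, p_i (convex hull property). -/
/-!
On `[τ i, τ (i+1))` only the `d` basis functions `B_{i-d+1,d}, …, B_{i,d}` can be nonzero. They
are nonnegative, and they sum to `1` there: writing the Cox–de Boor recursion as
`B_{j,d+1} = ω_j B_{j,d} + (1 - ω_{j+1}) B_{j+1,d}` with `ω_j(t) = (t - τ_j)/(τ_{j+d} - τ_j)`,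
the sum of the `B_{j,d+1}` telescopes to the sum of the `B_{j,d}`. Hence the curve point is a
convex combination of `p_{i-d+1}, …, p_i`. The knots only enter through monotonicity, so `τ`
may be replaced by the monotone sequence `k ↦ τ (min k m)`, which has the same basis functions
`B_{j,d}` for `j ≤ m - d`.
-/

/-- Cox–de Boor B-spline basis function `B_{i,d}(t)` of order `d` for the knot
vector `τ`.  In Lean, division by zero yields zero, which matches the standard
convention that any term of the recursion whose denominator vanishes is taken
to be zero. -/
noncomputable def bspline (τ : ℕ → ℝ) : ℕ → ℕ → ℝ → ℝ
  | 0, _, _ => 0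
  | 1, i, t => if τ i ≤ t ∧ t < τ (i + 1) then 1 else 0
  | d + 2, i, t =>
      (t - τ i) / (τ (i + d + 1) - τ i) * bspline τ (d + 1) i t
      + (τ (i + d + 2) - t) / (τ (i + d + 2) - τ (i + 1)) * bspline τ (d + 1) (i + 1) t

open Finset

noncomputable def bsplineWeight (τ : ℕ → ℝ) (d j : ℕ) (t : ℝ) : ℝ :=
  (t - τ j) / (τ (j + d) - τ j)

lemma bspline_congr {τ σ : ℕ → ℝ} {d j : ℕ} {t : ℝ} (h : Set.EqOn τ σ (Set.Icc j (j + d))) :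
    bspline τ d j t = bspline σ d j t := by
  induction d, j, t using bspline.induct τ with
  | case1 => rfl
  | case2 j t _ | case3 j t _ =>
    simp only [bspline, h (show j ∈ Set.Icc j (j + 1) by simp),
      h (show j + 1 ∈ Set.Icc j (j + 1) by simp)]
  | case4 d j t ih₁ ih₂ =>
    have hk (k : ℕ) (h₁ : j ≤ k) (h₂ : k ≤ j + (d + 2)) : τ k = σ k := h ⟨h₁, h₂⟩
    simp only [bspline, ih₁ (h.mono (Set.Icc_subset_Icc le_rfl (by omega))),
      ih₂ (h.mono (Set.Icc_subset_Icc (by omega) (by omega))), hk j le_rfl (by omega),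
      hk (j + 1) (by omega) (by omega), hk (j + d + 1) (by omega) (by omega),
      hk (j + d + 2) (by omega) (by omega)]

section Monotone

variable {τ : ℕ → ℝ} (hτ : Monotone τ)
include hτ

lemma bspline_eq_zero_of_notMem_Ico {d j : ℕ} {t : ℝ} (h : t ∉ Set.Ico (τ j) (τ (j + d))) :
    bspline τ d j t = 0 := by
  induction d, j, t using bspline.induct τ with
  | case1 => rfl
  | case2 j t ht => exact absurd ht h
  | case3 j t ht => simp [bspline, ht]
  | case4 d j t ih₁ ih₂ =>
    have h₁ : t ∉ Set.Ico (τ j) (τ (j + (d + 1))) := fun ⟨hj, hjd⟩ =>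
      h ⟨hj, hjd.trans_le (hτ (by omega))⟩
    have h₂ : t ∉ Set.Ico (τ (j + 1)) (τ (j + 1 + (d + 1))) := fun ⟨hj, hjd⟩ =>
      h ⟨(hτ (by omega)).trans hj, hjd.trans_le (hτ (by omega))⟩
    simp only [bspline, ih₁ h₁, ih₂ h₂, mul_zero, add_zero]

lemma mem_Ico_of_bspline_ne_zero {d j : ℕ} {t : ℝ} (h : bspline τ d j t ≠ 0) :
    t ∈ Set.Ico (τ j) (τ (j + d)) :=
  not_imp_comm.1 (bspline_eq_zero_of_notMem_Ico hτ) h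

lemma bspline_eq_zero_of_lt {d j : ℕ} {t : ℝ} (h : t < τ j) : bspline τ d j t = 0 :=
  bspline_eq_zero_of_notMem_Ico hτ fun ht => (h.trans_le ht.1).false

lemma bspline_eq_zero_of_le {d j : ℕ} {t : ℝ} (h : τ (j + d) ≤ t) : bspline τ d j t = 0 :=
  bspline_eq_zero_of_notMem_Ico hτ fun ht => (ht.2.trans_le h).false

lemma bspline_nonneg {d j : ℕ} {t : ℝ} : 0 ≤ bspline τ d j t := by
  induction d, j, t using bspline.induct τ with
  | case1 => rfl
  | case2 j t ht => simp [bspline, ht]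
  | case3 j t ht => simp [bspline, ht]
  | case4 d j t ih₁ ih₂ =>
    simp only [bspline]
    refine add_nonneg ?_ ?_
    · rcases eq_or_ne (bspline τ (d + 1) j t) 0 with h | h
      · simp [h]
      · have ht := mem_Ico_of_bspline_ne_zero hτ h
        exact mul_nonneg (div_nonneg (sub_nonneg.2 ht.1) (sub_nonneg.2 (hτ (by omega)))) ih₁
    · rcases eq_or_ne (bspline τ (d + 1) (j + 1) t) 0 with h | h
      · simp [h]
      · have ht := mem_Ico_of_bspline_ne_zero hτ h
        exact mul_nonneg (div_nonneg (sub_nonneg.2 (ht.2.le.trans (hτ (by omega))))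
          (sub_nonneg.2 (hτ (by omega)))) ih₂

/-- Valid because wherever the denominator of `bsplineWeight` vanishes, the basis function it
multiplies vanishes too. -/
lemma bspline_add_two (d j : ℕ) (t : ℝ) :
    bspline τ (d + 2) j t = bsplineWeight τ (d + 1) j t * bspline τ (d + 1) j t
      + (1 - bsplineWeight τ (d + 1) (j + 1) t) * bspline τ (d + 1) (j + 1) t := by
  simp only [bspline, bsplineWeight]
  congr 1
  rcases eq_or_ne (bspline τ (d + 1) (j + 1) t) 0 with h | h
  · simp [h]
  have ht := mem_Ico_of_bspline_ne_zero hτ h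
  rw [show j + 1 + (d + 1) = j + d + 2 by omega] at ht ⊢
  have hpos : 0 < τ (j + d + 2) - τ (j + 1) := sub_pos.2 (ht.1.trans_lt ht.2)
  field_simp
  ring

theorem sum_bspline_eq_one {d a : ℕ} {t : ℝ} (ht : t ∈ Set.Ico (τ (a + d)) (τ (a + d + 1))) :
    ∑ k ∈ range (d + 1), bspline τ (d + 1) (a + k) t = 1 := by
  induction d generalizing a with
  | zero =>
    rw [add_zero] at ht
    rw [sum_range_one, add_zero]
    exact if_pos ht
  | succ d ih =>
    set w : ℕ → ℝ := fun k => bsplineWeight τ (d + 1) (a + k) t * bspline τ (d + 1) (a + k) t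
    have hstep (k : ℕ) :
        bspline τ (d + 2) (a + k) t = w k - w (k + 1) + bspline τ (d + 1) (a + 1 + k) t := by
      rw [bspline_add_two hτ, show a + 1 + k = a + k + 1 by omega]
      simp only [w, ← add_assoc]
      ring
    have hw₀ : w 0 = 0 := by
      simp only [w, add_zero, bspline_eq_zero_of_le hτ (by simpa [add_assoc] using ht.1), mul_zero]
    have hw_last : w (d + 2) = 0 := by
      simp only [w, bspline_eq_zero_of_lt hτ (by simpa [add_assoc] using ht.2), mul_zero]
    have hlast : bspline τ (d + 1) (a + 1 + (d + 1)) t = 0 :=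
      bspline_eq_zero_of_lt hτ (ht.2.trans_le (hτ (by omega)))
    calc ∑ k ∈ range (d + 2), bspline τ (d + 2) (a + k) t
        = ∑ k ∈ range (d + 2), (w k - w (k + 1) + bspline τ (d + 1) (a + 1 + k) t) :=
          sum_congr rfl fun k _ => hstep k
      _ = ∑ k ∈ range (d + 1), bspline τ (d + 1) (a + 1 + k) t := by
          rw [sum_add_distrib, sum_range_sub', hw₀, hw_last, sum_range_succ _ (d + 1), hlast]
          ring
      _ = 1 := ih (by simpa [add_assoc, add_comm 1 d] using ht)

theorem sum_bspline_smul_mem_convexHull {E : Type*} [AddCommGroup E] [Module ℝ E] (p : ℕ → E)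
    {d a : ℕ} {t : ℝ} {s : Finset ℕ} (hs : Icc a (a + d) ⊆ s)
    (ht : t ∈ Set.Ico (τ (a + d)) (τ (a + d + 1))) :
    ∑ j ∈ s, bspline τ (d + 1) j t • p j ∈ convexHull ℝ (p '' Set.Icc a (a + d)) := by
  have hwindow : ∑ j ∈ Icc a (a + d), bspline τ (d + 1) j t • p j
      = ∑ j ∈ s, bspline τ (d + 1) j t • p j := by
    refine sum_subset hs fun j _ hj => ?_
    rw [mem_Icc, not_and_or, not_le, not_le] at hj
    rw [hj.elim (fun hja => bspline_eq_zero_of_le hτ (le_trans (hτ (by omega)) ht.1))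
      (fun hja => bspline_eq_zero_of_lt hτ (ht.2.trans_le (hτ (by omega)))), zero_smul]
  have hsum : ∑ j ∈ Icc a (a + d), bspline τ (d + 1) j t = 1 := by
    rw [← Ico_add_one_right_eq_Icc, sum_Ico_eq_sum_range, show a + d + 1 - a = d + 1 by omega]
    exact sum_bspline_eq_one hτ ht
  rw [← hwindow]
  exact (convex_convexHull ℝ _).sum_mem (fun j _ => bspline_nonneg hτ) hsum
    fun j hj => subset_convexHull ℝ _ ⟨j, by simpa using hj, rfl⟩

end Monotone

/-- convex-hull property.  For `τ i ≤ t < τ (i+1)` the B-spline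
curve lies in the convex hull of the `d` consecutive control points
`p (i-d+1), …, p i` (with `n = m - d`). -/
theorem bspline_curve_convex_hull (q m d i : ℕ) (τ : ℕ → ℝ)
    (hτ : ∀ j, j < m → τ j < τ (j + 1))
    (hd : 1 ≤ d) (hdm : d ≤ m) (hi1 : d - 1 ≤ i) (hi2 : i ≤ m - d)
    (p : ℕ → EuclideanSpace ℝ (Fin q))
    (t : ℝ) (ht1 : τ i ≤ t) (ht2 : t < τ (i + 1)) :
    (∑ j ∈ Finset.range (m - d + 1), bspline τ d j t • p j) ∈
      convexHull ℝ (p '' Set.Icc (i - (d - 1)) i) := by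
  obtain ⟨d, rfl⟩ : ∃ e, d = e + 1 := ⟨d - 1, by omega⟩
  obtain ⟨a, rfl⟩ : ∃ a, i = a + d := ⟨i - d, by omega⟩
  simp only [Nat.add_sub_cancel]
  set σ : ℕ → ℝ := fun k => τ (min k m)
  have hσ : Monotone σ := monotone_nat_of_le_succ fun k => by
    rcases lt_or_ge k m with hk | hk
    · simpa [σ, min_eq_left hk.le, min_eq_left (Nat.succ_le_of_lt hk)] using (hτ k hk).le
    · simp [σ, min_eq_right hk, min_eq_right (hk.trans k.le_succ)]
  have hτσ : Set.EqOn τ σ (Set.Iic m) := fun k hk => by simp [σ, min_eq_left (Set.mem_Iic.1 hk)]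
  rw [sum_congr rfl fun j hj => by rw [bspline_congr (hτσ.mono fun k hk =>
    Set.mem_Iic.2 (by have := mem_range.1 hj; have := hk.2; omega))]]
  refine sum_bspline_smul_mem_convexHull hσ p
    (fun j hj => mem_range.2 (by have := (mem_Icc.1 hj).2; omega)) ⟨?_, ?_⟩
  · rwa [← hτσ (Set.mem_Iic.2 (by omega : a + d ≤ m))]
  · rwa [← hτσ (Set.mem_Iic.2 (by omega : a + d + 1 ≤ m))]
end

section
/- (Inter-agent collision avoidance with distinct knot vectors, Proposition 2.) Let z¹ and z² be B-spline curves of order d with control points p^1_0,…,p^1_n and p^2_0,…,p^2_n, defined over strictly increasing knot vectors τ_0 < … < τ_m and σ_0 < … < σ_m respectively (n = m − d). Suppose that for every pair of indices (i_1, i_2) with d − 1 ≤ i_1, i_2 ≤ n such that the intervals [τ_{i_1}, τ_{i_1+1}] and [σ_{i_2}, σ_{i_2+1}] intersect, there exists a vector c ∈ ℝ^q with ⟨c, p^1_{j_1}⟩ < ⟨c, p^2_{j_2}⟩ for all j_1 with i_1 − d + 1 ≤ j_1 ≤ i_1 and all j_2 with i_2 − d + 1 ≤ j_2 ≤ i_2.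 Then z¹(t) ≠ z²(t) for every t with max(τ_{d−1}, σ_{d−1}) ≤ t < min(τ_{n+1}, σ_{n+1}). -/
/-!
On each knot interval `[τ i, τ (i + 1))` the Cox–de Boor basis functions of order `d` are
nonnegative, vanish except for the `d` indices `i - (d - 1), …, i`, and sum to one there. Hence
`z¹ t` lies in the convex hull of the active control points of the first curve and `z² t` in that of
the second. For `t` in both active intervals the linear functional `⟪c, ·⟫` separates the two finite
point sets strictly, so by the maximum and minimum principles it separates their convex hulls, and
the two curves cannot meet.
-/

theorem disjoint_convexHull_of_forall_lt {E : Type*} [AddCommGroup E] [Module ℝ E]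
    (f : E →ₗ[ℝ] ℝ) {A B : Set E} (h : ∀ a ∈ A, ∀ b ∈ B, f a < f b) :
    Disjoint (convexHull ℝ A) (convexHull ℝ B) := by
  refine Set.disjoint_left.2 fun x hxA hxB => ?_
  obtain ⟨a, ha, hxa⟩ :=
    (f.convexOn convex_univ).exists_ge_of_mem_convexHull (Set.subset_univ A) hxA
  obtain ⟨b, hb, hbx⟩ :=
    (f.concaveOn convex_univ).exists_le_of_mem_convexHull (Set.subset_univ B) hxB
  exact (h a ha b hb).not_ge (hbx.trans hxa)

theorem exists_mem_Ico_of_le_of_lt {α : Type*} [LinearOrder α] (f : ℕ → α) {a b : ℕ} {x : α}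
    (hab : a ≤ b) (ha : f a ≤ x) (hb : x < f b) :
    ∃ i, a ≤ i ∧ i < b ∧ x ∈ Set.Ico (f i) (f (i + 1)) := by
  induction b, hab using Nat.le_induction with
  | base => exact absurd hb ha.not_gt
  | succ b hab ih =>
    by_cases hx : f b ≤ x
    · exact ⟨b, hab, b.lt_succ_self, hx, hb⟩
    · obtain ⟨i, hai, hib, hi⟩ := ih (not_le.1 hx)
      exact ⟨i, hai, hib.trans b.lt_succ_self, hi⟩

namespace bspline

variable {τ : ℕ → ℝ} {t : ℝ}

theorem one_apply (τ : ℕ → ℝ) (i : ℕ) (t : ℝ) :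
    bspline τ 1 i t = if τ i ≤ t ∧ t < τ (i + 1) then 1 else 0 := rfl

theorem add_two_apply (τ : ℕ → ℝ) (d i : ℕ) (t : ℝ) :
    bspline τ (d + 2) i t =
      (t - τ i) / (τ (i + d + 1) - τ i) * bspline τ (d + 1) i t
      + (τ (i + d + 2) - t) / (τ (i + d + 2) - τ (i + 1)) * bspline τ (d + 1) (i + 1) t := rfl

theorem eq_zero_of_notMem_Ico {d i : ℕ} (hτ : MonotoneOn τ (Set.Icc i (i + d)))
    (ht : t ∉ Set.Ico (τ i) (τ (i + d))) : bspline τ d i t = 0 := by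
  induction d generalizing i with
  | zero => rfl
  | succ d ih =>
    rcases d with _ | d
    · simpa [one_apply] using ht
    · have hτi : τ i ≤ τ (i + 1) := hτ ⟨le_rfl, by omega⟩ ⟨by omega, by omega⟩ (by omega)
      have hτd : τ (i + d + 1) ≤ τ (i + d + 2) :=
        hτ ⟨by omega, by omega⟩ ⟨by omega, by omega⟩ (by omega)
      have h₁ : bspline τ (d + 1) i t = 0 :=
        ih (hτ.mono (Set.Icc_subset_Icc_right (by omega))) fun ⟨h₁, h₂⟩ =>
          ht ⟨h₁, h₂.trans_le (by simpa [add_assoc] using hτd)⟩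
      have h₂ : bspline τ (d + 1) (i + 1) t = 0 :=
        ih (hτ.mono (Set.Icc_subset_Icc (by omega) (by omega))) fun ⟨h₁, h₂⟩ =>
          ht ⟨hτi.trans h₁, by simpa [add_assoc, add_comm 1] using h₂⟩
      rw [add_two_apply, h₁, h₂, mul_zero, mul_zero, add_zero]

theorem nonneg {d i : ℕ} (hτ : MonotoneOn τ (Set.Icc i (i + d))) : 0 ≤ bspline τ d i t := by
  induction d generalizing i with
  | zero => rfl
  | succ d ih =>
    rcases d with _ | d
    · rw [one_apply]; split_ifs <;> norm_num
    · have hτ₁ : MonotoneOn τ (Set.Icc i (i + (d + 1))) :=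
        hτ.mono (Set.Icc_subset_Icc_right (by omega))
      have hτ₂ : MonotoneOn τ (Set.Icc (i + 1) (i + 1 + (d + 1))) :=
        hτ.mono (Set.Icc_subset_Icc (by omega) (by omega))
      rw [add_two_apply]
      refine add_nonneg ?_ ?_
      · by_cases ht : t ∈ Set.Ico (τ i) (τ (i + (d + 1)))
        · have hden : τ i ≤ τ (i + d + 1) := hτ ⟨le_rfl, by omega⟩ ⟨by omega, by omega⟩ (by omega)
          exact mul_nonneg (div_nonneg (sub_nonneg.2 ht.1) (sub_nonneg.2 hden)) (ih hτ₁)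
        · rw [eq_zero_of_notMem_Ico hτ₁ ht, mul_zero]
      · by_cases ht : t ∈ Set.Ico (τ (i + 1)) (τ (i + 1 + (d + 1)))
        · have hden : τ (i + 1) ≤ τ (i + d + 2) :=
            hτ ⟨by omega, by omega⟩ ⟨by omega, by omega⟩ (by omega)
          have hnum : t ≤ τ (i + d + 2) := ht.2.le.trans_eq (by congr 1; omega)
          exact mul_nonneg (div_nonneg (sub_nonneg.2 hnum) (sub_nonneg.2 hden)) (ih hτ₂)
        · rw [eq_zero_of_notMem_Ico hτ₂ ht, mul_zero]

theorem sum_range_eq_one {d r : ℕ} (hτ : StrictMonoOn τ (Set.Icc r (r + 2 * d + 1)))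
    (ht : t ∈ Set.Ico (τ (r + d)) (τ (r + d + 1))) :
    ∑ k ∈ Finset.range (d + 1), bspline τ (d + 1) (r + k) t = 1 := by
  induction d generalizing r with
  | zero => rw [Finset.sum_range_one, add_zero, one_apply, if_pos (by simpa using ht)]
  | succ d ih =>
    have hlow : bspline τ (d + 1) r t = 0 :=
      eq_zero_of_notMem_Ico (hτ.monotoneOn.mono (Set.Icc_subset_Icc_right (by omega)))
        fun h => h.2.not_ge ht.1
    have hhigh : bspline τ (d + 1) (r + (d + 1) + 1) t = 0 :=
      eq_zero_of_notMem_Ico (hτ.monotoneOn.mono (Set.Icc_subset_Icc (by omega) (by omega)))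
        fun h => h.1.not_gt ht.2
    have hweights : ∀ k ∈ Finset.range (d + 1),
        (t - τ (r + k + 1)) / (τ (r + k + 1 + d + 1) - τ (r + k + 1)) +
          (τ (r + k + d + 2) - t) / (τ (r + k + d + 2) - τ (r + k + 1)) = 1 := by
      intro k hk
      rw [Finset.mem_range] at hk
      have hlt : τ (r + k + 1) < τ (r + k + d + 2) :=
        hτ ⟨by omega, by omega⟩ ⟨by omega, by omega⟩ (by omega)
      rw [show r + k + 1 + d + 1 = r + k + d + 2 by omega, ← add_div, sub_add_sub_cancel',
        div_self (sub_ne_zero.2 hlt.ne')]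
    have hih := ih (r := r + 1) (hτ.mono (Set.Icc_subset_Icc (by omega) (by omega)))
      (by rwa [show r + 1 + d = r + (d + 1) by omega])
    -- Expanding by the recursion, the two extreme terms vanish on this interval and the two
    -- weights multiplying each remaining `bspline τ (d + 1) (r + k + 1) t` add up to one.
    rw [Finset.sum_congr rfl fun k _ => add_two_apply τ d (r + k) t, Finset.sum_add_distrib,
      Finset.sum_range_succ' (fun k => (t - τ (r + k)) / _ * bspline τ (d + 1) (r + k) t),
      Finset.sum_range_succ
        (fun k => (τ (r + k + d + 2) - t) / _ * bspline τ (d + 1) (r + k + 1) t),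
      add_zero, hlow, hhigh, mul_zero, mul_zero, add_zero, add_zero, ← Finset.sum_add_distrib,
      ← hih]
    refine Finset.sum_congr rfl fun k hk => ?_
    rw [← add_assoc r k 1, ← add_mul, hweights k hk, one_mul, add_right_comm r 1 k]

theorem sum_smul_mem_convexHull {E : Type*} [AddCommGroup E] [Module ℝ E] {m d i : ℕ}
    (p : ℕ → E) (hτ : StrictMonoOn τ (Set.Iic m)) (hd : 1 ≤ d) (hdm : d ≤ m) (hi : d - 1 ≤ i)
    (him : i ≤ m - d) (ht : t ∈ Set.Ico (τ i) (τ (i + 1))) :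
    ∑ j ∈ Finset.range (m - d + 1), bspline τ d j t • p j ∈
      convexHull ℝ (p '' Set.Icc (i - (d - 1)) i) := by
  obtain ⟨e, rfl⟩ : ∃ e, d = e + 1 := ⟨d - 1, by omega⟩
  obtain ⟨r, rfl⟩ : ∃ r, i = r + e := ⟨i - e, by omega⟩
  have hτle : ∀ {a b}, a ≤ b → b ≤ m → τ a ≤ τ b := fun hab hb =>
    hτ.monotoneOn (Set.mem_Iic.2 (hab.trans hb)) (Set.mem_Iic.2 hb) hab
  have hmono : ∀ j, j + (e + 1) ≤ m → MonotoneOn τ (Set.Icc j (j + (e + 1))) := fun j hj =>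
    hτ.monotoneOn.mono (Set.Icc_subset_Iic_self.trans (Set.Iic_subset_Iic.2 hj))
  have hwindow : Finset.Ico r (r + (e + 1)) ⊆ Finset.range (m - (e + 1) + 1) := fun j hj => by
    simp only [Finset.mem_Ico, Finset.mem_range] at hj ⊢
    omega
  have hzero : ∀ j ∈ Finset.range (m - (e + 1) + 1), j ∉ Finset.Ico r (r + (e + 1)) →
      bspline τ (e + 1) j t • p j = 0 := by
    intro j hj hjW
    simp only [Finset.mem_Ico, Finset.mem_range, not_and_or, not_le, not_lt] at hj hjW
    rw [eq_zero_of_notMem_Ico (hmono j (by omega)), zero_smul]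
    rintro ⟨h₁, h₂⟩
    rcases hjW with hjr | hjr
    · exact h₂.not_ge ((hτle (by omega) (by omega)).trans ht.1)
    · exact ht.2.not_ge (h₁.trans' (hτle (by omega) (by omega)))
  have hsum : ∑ j ∈ Finset.Ico r (r + (e + 1)), bspline τ (e + 1) j t = 1 := by
    rw [Finset.sum_Ico_eq_sum_range, add_tsub_cancel_left]
    exact sum_range_eq_one
      (hτ.mono (Set.Icc_subset_Iic_self.trans (Set.Iic_subset_Iic.2 (by omega)))) ht
  rw [← Finset.sum_subset hwindow hzero]
  refine (convex_convexHull ℝ _).sum_mem (fun j hj => nonneg (hmono j ?_)) hsum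
    fun j hj => subset_convexHull ℝ _ ⟨j, ?_, rfl⟩ <;>
  · simp only [Finset.mem_Ico, Set.mem_Icc] at hj ⊢
    omega

end bspline

open scoped RealInnerProductSpace

/-- Proposition 2: inter-agent collision avoidance for two
B-spline curves over distinct knot vectors `τ` and `σ` (here `n = m - d`).
Separation is required for every pair of windows whose knot intervals
overlap in time. -/
theorem bspline_interagent_avoidance (q m d : ℕ) (τ σ : ℕ → ℝ)
    (hτ : ∀ j, j < m → τ j < τ (j + 1))
    (hσ : ∀ j, j < m → σ j < σ (j + 1))
    (hd : 1 ≤ d) (hdm : d ≤ m)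
    (p1 p2 : ℕ → EuclideanSpace ℝ (Fin q))
    (hsep : ∀ i1 i2, d - 1 ≤ i1 → i1 ≤ m - d → d - 1 ≤ i2 → i2 ≤ m - d →
      (Set.Icc (τ i1) (τ (i1 + 1)) ∩ Set.Icc (σ i2) (σ (i2 + 1))).Nonempty →
      ∃ c : EuclideanSpace ℝ (Fin q),
        ∀ j1 j2, i1 - (d - 1) ≤ j1 → j1 ≤ i1 → i2 - (d - 1) ≤ j2 → j2 ≤ i2 →
          ⟪c, p1 j1⟫ < ⟪c, p2 j2⟫)
    (t : ℝ) (ht1 : max (τ (d - 1)) (σ (d - 1)) ≤ t)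
    (ht2 : t < min (τ (m - d + 1)) (σ (m - d + 1))) :
    (∑ j ∈ Finset.range (m - d + 1), bspline τ d j t • p1 j) ≠
      (∑ j ∈ Finset.range (m - d + 1), bspline σ d j t • p2 j) := by
  have hτ' : StrictMonoOn τ (Set.Iic m) := strictMonoOn_Iic_of_lt_succ hτ
  have hσ' : StrictMonoOn σ (Set.Iic m) := strictMonoOn_Iic_of_lt_succ hσ
  obtain ⟨hτt, hσt⟩ := max_le_iff.1 ht1
  obtain ⟨hτt', hσt'⟩ := lt_min_iff.1 ht2
  have hlt : d - 1 < m - d + 1 :=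
    (hτ'.lt_iff_lt (Set.mem_Iic.2 (by omega)) (Set.mem_Iic.2 (by omega))).1 (hτt.trans_lt hτt')
  obtain ⟨i1, hi1, hi1m, hti1⟩ := exists_mem_Ico_of_le_of_lt τ hlt.le hτt hτt'
  obtain ⟨i2, hi2, hi2m, hti2⟩ := exists_mem_Ico_of_le_of_lt σ hlt.le hσt hσt'
  obtain ⟨c, hc⟩ := hsep i1 i2 hi1 (by omega) hi2 (by omega)
    ⟨t, Set.Ico_subset_Icc_self hti1, Set.Ico_subset_Icc_self hti2⟩
  refine (disjoint_convexHull_of_forall_lt (innerₛₗ ℝ c) ?_).ne_of_mem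
    (bspline.sum_smul_mem_convexHull p1 hτ' hd hdm hi1 (by omega) hti1)
    (bspline.sum_smul_mem_convexHull p2 hσ' hd hdm hi2 (by omega) hti2)
  rintro _ ⟨j1, ⟨hj1, hj1'⟩, rfl⟩ _ ⟨j2, ⟨hj2, hj2'⟩, rfl⟩
  exact hc j1 j2 hj1 hj1' hj2 hj2'
end

section
/- (Piecewise polynomial structure of B-splines, property P1.) Let the knot vector be strictly increasing and let j be an index with 0 ≤ j < m. For every order d ≥ 1 and every index i with 0 ≤ i ≤ m − d, there exists a polynomial function P : ℝ → ℝ of degree at most d − 1 such that B_{i,d}(t) = P(t) for all t in the open interval (τ_j, τ_{j+1}); in particular each B-spline basis function is infinitely differentiable at every point that is not a knot. -/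
lemma bspline_mono (m : ℕ) (τ : ℕ → ℝ) (hτ : ∀ l, l < m → τ l < τ (l + 1)) :
    ∀ a b, a ≤ b → b ≤ m → τ a ≤ τ b := by
  intro a b hab hbm
  induction b with
  | zero => simp [Nat.le_zero.mp hab]
  | succ n ih =>
    rcases Nat.lt_or_ge a (n+1) with h | h
    · exact le_trans (ih (Nat.lt_succ_iff.mp h) (le_trans (Nat.le_succ n) hbm))
        (hτ n (Nat.lt_of_succ_le hbm)).le
    · have : a = n + 1 := le_antisymm hab h
      simp [this]

lemma bspline_poly (m j : ℕ) (τ : ℕ → ℝ) (hτ : ∀ l, l < m → τ l < τ (l + 1))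
    (hj : j < m) :
    ∀ n i, i + (n + 1) ≤ m →
      ∃ P : Polynomial ℝ, P.degree ≤ (n : ℕ) ∧
        ∀ t ∈ Set.Ioo (τ j) (τ (j + 1)), bspline τ (n + 1) i t = P.eval t := by
  intro n
  induction n with
  | zero =>
    intro i hi
    rcases lt_trichotomy i j with h | h | h
    · refine ⟨0, by simp, fun t ht => ?_⟩
      have h1 : τ (i + 1) ≤ τ j := bspline_mono m τ hτ _ _ h (le_of_lt hj)
      have : ¬ (t < τ (i + 1)) := not_lt.mpr (le_trans h1 ht.1.le)
      simp [bspline, this]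
    · subst h
      refine ⟨1, by simp, fun t ht => ?_⟩
      simp [bspline, ht.1.le, ht.2]
    · refine ⟨0, by simp, fun t ht => ?_⟩
      have h1 : τ (j + 1) ≤ τ i := bspline_mono m τ hτ _ _ h (by omega)
      have : ¬ (τ i ≤ t) := not_le.mpr (lt_of_lt_of_le ht.2 h1)
      simp [bspline, this]
  | succ n ih =>
    intro i hi
    obtain ⟨P1, hP1d, hP1⟩ := ih i (by omega)
    obtain ⟨P2, hP2d, hP2⟩ := ih (i + 1) (by omega)
    set c1 : ℝ := (τ (i + n + 1) - τ i)⁻¹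
    set c2 : ℝ := (τ (i + n + 2) - τ (i + 1))⁻¹
    refine ⟨Polynomial.C c1 * (Polynomial.X - Polynomial.C (τ i)) * P1
        + Polynomial.C c2 * (Polynomial.C (τ (i + n + 2)) - Polynomial.X) * P2,
      ?_, fun t ht => ?_⟩
    · apply le_trans (Polynomial.degree_add_le _ _)
      apply max_le
      · calc (Polynomial.C c1 * (Polynomial.X - Polynomial.C (τ i)) * P1).degree
            ≤ (Polynomial.C c1 * (Polynomial.X - Polynomial.C (τ i))).degree + P1.degree :=
              Polynomial.degree_mul_le _ _
          _ ≤ (Polynomial.C c1).degree + (Polynomial.X - Polynomial.C (τ i)).degree + P1.degree := by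
              gcongr; exact Polynomial.degree_mul_le _ _
          _ ≤ 0 + 1 + (n : ℕ) := by
              gcongr
              · exact Polynomial.degree_C_le
              · exact (Polynomial.degree_X_sub_C _).le
          _ ≤ ((n + 1 : ℕ) : WithBot ℕ) := by
              rw [zero_add, Nat.cast_add, Nat.cast_one, add_comm]
      · calc (Polynomial.C c2 * (Polynomial.C (τ (i + n + 2)) - Polynomial.X) * P2).degree
            ≤ (Polynomial.C c2 * (Polynomial.C (τ (i + n + 2)) - Polynomial.X)).degree + P2.degree :=
              Polynomial.degree_mul_le _ _
          _ ≤ (Polynomial.C c2).degree + (Polynomial.C (τ (i + n + 2)) - Polynomial.X).degree + P2.degree := by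
              gcongr; exact Polynomial.degree_mul_le _ _
          _ ≤ 0 + 1 + (n : ℕ) := by
              gcongr
              · exact Polynomial.degree_C_le
              · rw [← neg_sub, Polynomial.degree_neg]
                exact (Polynomial.degree_X_sub_C _).le
          _ ≤ ((n + 1 : ℕ) : WithBot ℕ) := by
              rw [zero_add, Nat.cast_add, Nat.cast_one, add_comm]
    · have e1 := hP1 t ht
      have e2 := hP2 t ht
      show (t - τ i) / (τ (i + n + 1) - τ i) * bspline τ (n + 1) i t
          + (τ (i + n + 2) - t) / (τ (i + n + 2) - τ (i + 1)) * bspline τ (n + 1) (i + 1) t = _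
      rw [e1, e2]
      simp only [Polynomial.eval_add, Polynomial.eval_mul, Polynomial.eval_sub,
        Polynomial.eval_C, Polynomial.eval_X, div_eq_mul_inv]
      ring

lemma bspline_smooth (τ : ℕ → ℝ) :
    ∀ n i (t : ℝ), (∀ l, i ≤ l → l ≤ i + (n + 1) → t ≠ τ l) →
      ContDiffAt ℝ (⊤ : ℕ∞) (bspline τ (n + 1) i) t := by
  intro n
  induction n with
  | zero =>
    intro i t ht
    have h0 : t ≠ τ i := ht i le_rfl (by omega)
    have h1 : t ≠ τ (i + 1) := ht (i + 1) (by omega) (by omega)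
    have : ∃ c : ℝ, ∀ᶠ s in nhds t, bspline τ 1 i s = c := by
      rcases lt_or_gt_of_ne h0 with h | h
      · refine ⟨0, Filter.eventually_of_mem (Iio_mem_nhds h) fun s hs => ?_⟩
        have : ¬ (τ i ≤ s) := not_le.mpr hs
        simp [bspline, this]
      · rcases lt_or_gt_of_ne h1 with h' | h'
        · refine ⟨1, Filter.eventually_of_mem (Ioo_mem_nhds h h') fun s hs => ?_⟩
          simp [bspline, hs.1.le, hs.2]
        · refine ⟨0, Filter.eventually_of_mem (Ioi_mem_nhds h') fun s hs => ?_⟩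
          have : ¬ (s < τ (i + 1)) := not_lt.mpr (le_of_lt hs)
          simp [bspline, this]
    obtain ⟨c, hc⟩ := this
    exact contDiffAt_const.congr_of_eventuallyEq hc
  | succ n ih =>
    intro i t ht
    have h1 : ContDiffAt ℝ (⊤ : ℕ∞) (bspline τ (n + 1) i) t :=
      ih i t (fun l hl hl' => ht l hl (by omega))
    have h2 : ContDiffAt ℝ (⊤ : ℕ∞) (bspline τ (n + 1) (i + 1)) t :=
      ih (i + 1) t (fun l hl hl' => ht l (by omega) (by omega))
    have heq : bspline τ (n + 2) i = fun s =>
        (s - τ i) / (τ (i + n + 1) - τ i) * bspline τ (n + 1) i s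
        + (τ (i + n + 2) - s) / (τ (i + n + 2) - τ (i + 1)) * bspline τ (n + 1) (i + 1) s := by
      funext s; rfl
    rw [heq]
    exact (((contDiffAt_id.sub contDiffAt_const).div_const _).mul h1).add
      (((contDiffAt_const.sub contDiffAt_id).div_const _).mul h2)

/-- property P1: on each open knot interval the B-spline basis
function coincides with a polynomial of degree at most `d - 1`; in particular
it is infinitely differentiable at every point that is not a knot. -/
theorem bspline_piecewise_polynomial (m d i j : ℕ) (τ : ℕ → ℝ)
    (hτ : ∀ l, l < m → τ l < τ (l + 1))
    (hj : j < m) (hd : 1 ≤ d) (hi : i + d ≤ m) :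
    (∃ P : Polynomial ℝ, P.degree ≤ (d - 1 : ℕ) ∧
      ∀ t ∈ Set.Ioo (τ j) (τ (j + 1)), bspline τ d i t = P.eval t) ∧
    (∀ t : ℝ, (∀ l, l ≤ m → t ≠ τ l) → ContDiffAt ℝ (⊤ : ℕ∞) (bspline τ d i) t) := by
  obtain ⟨n, rfl⟩ : ∃ n, d = n + 1 := ⟨d - 1, by omega⟩
  constructor
  · simpa using bspline_poly m j τ hτ hj n i hi
  · intro t ht
    exact bspline_smooth τ n i t (fun l hl hl' => ht l (by omega))
end

section
/- (Derivative formula for B-splines, property P3 with r = 1.) Let the knot vector be strictly increasing, let d ≥ 2, let 0 ≤ i ≤ m − d, and let t be a point that is not a knot, lying in some open interval (τ_j, τ_{j+1}). Then B_{i,d} is differentiable at t and its derivative satisfies B'_{i,d}(t) = (d − 1)·( B_{i,d−1}(t)/(τ_{i+d−1} − τ_i) − B_{i+1,d−1}(t)/(τ_{i+d} − τ_{i+1}) ); in particular the derivative of an order-d B-spline basis function is a linear combination of order-(d−1) B-spline basis functions. -/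
/-!
Induction on the order. Differentiating the Cox–de Boor recursion
`B_{i,k+2} = ω_i B_{i,k+1} + (1 - ω_{i+1}) B_{i+1,k+1}` by the product rule, the weights contribute
`B_{i,k+1}/(τ_{i+k+1} - τ_i) - B_{i+1,k+1}/(τ_{i+k+2} - τ_{i+1})` once, and the induction hypothesis
contributes `k` more copies of it, because these divided differences satisfy the same recursion
as the B-splines themselves. Order 1 is locally constant away from the knots.
-/

open Filter Topology Set

lemma eventually_le_iff_of_ne {α : Type*} [LinearOrder α] [TopologicalSpace α] [OrderTopology α]
    {a t : α} (h : a ≠ t) : ∀ᶠ s in 𝓝 t, (a ≤ s ↔ a ≤ t) := by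
  rcases h.lt_or_gt with h | h
  · filter_upwards [eventually_gt_nhds h] with s hs
    simp [hs.le, h.le]
  · filter_upwards [eventually_lt_nhds h] with s hs
    simp [not_le.2 hs, not_le.2 h]

lemma notMem_image_Iic_of_mem_Ioo {α : Type*} [Preorder α] {τ : ℕ → α} {m j : ℕ} {t : α}
    (hτ : MonotoneOn τ (Iic m)) (hj : j < m) (ht : t ∈ Ioo (τ j) (τ (j + 1))) :
    t ∉ τ '' Iic m := by
  rintro ⟨l, hl, rfl⟩
  rcases le_or_gt l j with hlj | hjl
  · exact (hτ hl (mem_Iic.2 hj.le) hlj).not_gt ht.1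
  · exact (hτ (mem_Iic.2 hj) hl hjl).not_gt ht.2

section

variable (τ : ℕ → ℝ)

lemma bspline_succ {k : ℕ} (hk : k ≠ 0) (i : ℕ) (t : ℝ) :
    bspline τ (k + 1) i t = (t - τ i) / (τ (i + k) - τ i) * bspline τ k i t
      + (τ (i + k + 1) - t) / (τ (i + k + 1) - τ (i + 1)) * bspline τ k (i + 1) t := by
  obtain ⟨d, rfl⟩ := Nat.exists_eq_succ_of_ne_zero hk
  rfl

lemma bspline_one_eventuallyEq {i : ℕ} {t : ℝ} (h₀ : τ i ≠ t) (h₁ : τ (i + 1) ≠ t) :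
    bspline τ 1 i =ᶠ[𝓝 t] fun _ ↦ bspline τ 1 i t := by
  filter_upwards [eventually_le_iff_of_ne h₀, eventually_le_iff_of_ne h₁] with s hs₀ hs₁
  simp only [bspline, ← not_le, hs₀, hs₁]

noncomputable def bsplineDiff (k i : ℕ) (t : ℝ) : ℝ :=
  bspline τ k i t / (τ (i + k) - τ i) - bspline τ k (i + 1) t / (τ (i + k + 1) - τ (i + 1))

lemma bsplineDiff_succ {k i : ℕ} (hk : k ≠ 0) (hτ : InjOn τ (Icc i (i + k + 2))) (t : ℝ) :
    (t - τ i) / (τ (i + k + 1) - τ i) * bsplineDiff τ k i t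
      + (τ (i + k + 2) - t) / (τ (i + k + 2) - τ (i + 1)) * bsplineDiff τ k (i + 1) t
      = bsplineDiff τ (k + 1) i t := by
  have hne : ∀ p q, p ∈ Icc i (i + k + 2) → q ∈ Icc i (i + k + 2) → p ≠ q → τ q - τ p ≠ 0 :=
    fun p q hp hq hpq ↦ sub_ne_zero.2 fun h ↦ hpq (hτ hp hq h.symm)
  have h₁ := hne i (i + k) ⟨by omega, by omega⟩ ⟨by omega, by omega⟩ (by omega)
  have h₂ := hne (i + 1) (i + k + 1) ⟨by omega, by omega⟩ ⟨by omega, by omega⟩ (by omega)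
  have h₃ := hne i (i + k + 1) ⟨by omega, by omega⟩ ⟨by omega, by omega⟩ (by omega)
  have h₄ := hne (i + 1) (i + k + 2) ⟨by omega, by omega⟩ ⟨by omega, by omega⟩ (by omega)
  have h₅ := hne (i + 2) (i + k + 2) ⟨by omega, by omega⟩ ⟨by omega, by omega⟩ (by omega)
  simp only [bsplineDiff, bspline_succ τ hk, ← add_assoc, show i + 1 + k = i + k + 1 by omega,
    show i + k + 1 + 1 = i + k + 2 by omega, show i + 1 + 1 = i + 2 by omega]
  field_simp
  ring

theorem hasDerivAt_bspline (k i : ℕ) (t : ℝ) (hτ : InjOn τ (Icc i (i + k + 1)))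
    (ht : t ∉ τ '' Icc i (i + k + 1)) :
    HasDerivAt (bspline τ (k + 1) i) (k * bsplineDiff τ k i t) t := by
  induction k generalizing i with
  | zero =>
    have h₀ : τ i ≠ t := fun h ↦ ht ⟨i, ⟨le_rfl, by omega⟩, h⟩
    have h₁ : τ (i + 1) ≠ t := fun h ↦ ht ⟨i + 1, ⟨by omega, le_rfl⟩, h⟩
    simpa using (hasDerivAt_const t _).congr_of_eventuallyEq (bspline_one_eventuallyEq τ h₀ h₁)
  | succ k ih =>
    have hsub₀ : Icc i (i + k + 1) ⊆ Icc i (i + (k + 1) + 1) := Icc_subset_Icc le_rfl (by omega)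
    have hsub₁ : Icc (i + 1) (i + 1 + k + 1) ⊆ Icc i (i + (k + 1) + 1) :=
      Icc_subset_Icc (by omega) (by omega)
    have h₀ := ih i (hτ.mono hsub₀) fun h ↦ ht (image_mono hsub₀ h)
    have h₁ := ih (i + 1) (hτ.mono hsub₁) fun h ↦ ht (image_mono hsub₁ h)
    have hw₀ : HasDerivAt (fun s ↦ (s - τ i) / (τ (i + k + 1) - τ i))
        (1 / (τ (i + k + 1) - τ i)) t :=
      ((hasDerivAt_id t).sub_const _).div_const _
    have hw₁ : HasDerivAt (fun s ↦ (τ (i + k + 2) - s) / (τ (i + k + 2) - τ (i + 1)))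
        (-1 / (τ (i + k + 2) - τ (i + 1))) t := by
      simpa using ((hasDerivAt_id t).const_sub _).div_const _
    have hrec : (k : ℝ) * ((t - τ i) / (τ (i + k + 1) - τ i) * bsplineDiff τ k i t
        + (τ (i + k + 2) - t) / (τ (i + k + 2) - τ (i + 1)) * bsplineDiff τ k (i + 1) t)
        = k * bsplineDiff τ (k + 1) i t := by
      rcases eq_or_ne k 0 with rfl | hk
      · simp
      · rw [bsplineDiff_succ τ hk (hτ.mono (Icc_subset_Icc le_rfl (by omega)))]
    refine ((hw₀.mul h₀).add (hw₁.mul h₁)).congr_deriv ?_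
    simp only [bsplineDiff, ← add_assoc] at hrec ⊢
    push_cast
    linear_combination hrec

end

theorem bspline_deriv_general (m d i j : ℕ) (τ : ℕ → ℝ)
    (hτ : ∀ l, l < m → τ l < τ (l + 1))
    (hi : i + d ≤ m) (hj : j < m)
    (t : ℝ) (ht : t ∈ Set.Ioo (τ j) (τ (j + 1))) :
    HasDerivAt (bspline τ d i)
      (((d : ℝ) - 1) *
        (bspline τ (d - 1) i t / (τ (i + d - 1) - τ i)
          - bspline τ (d - 1) (i + 1) t / (τ (i + d) - τ (i + 1)))) t := by
  have hmono : StrictMonoOn τ (Iic m) := strictMonoOn_Iic_of_lt_succ hτ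
  have hknot := notMem_image_Iic_of_mem_Ioo hmono.monotoneOn hj ht
  rcases d with _ | k
  · simpa [bspline] using hasDerivAt_const t (0 : ℝ)
  · have hsub : Icc i (i + k + 1) ⊆ Iic m := fun l hl ↦ mem_Iic.2 (hl.2.trans (by omega))
    convert hasDerivAt_bspline τ k i t (hmono.injOn.mono hsub) fun h ↦ hknot (image_mono hsub h)
      using 1
    simp [bsplineDiff, ← add_assoc]

/-- property P3 for r = 1: at any point that is not a knot, the
order-`d` B-spline basis function is differentiable and its derivative is the
stated linear combination of order-`(d-1)` basis functions. -/
theorem bspline_deriv (m d i j : ℕ) (τ : ℕ → ℝ)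
    (hτ : ∀ l, l < m → τ l < τ (l + 1))
    (hd : 2 ≤ d) (hi : i + d ≤ m) (hj : j < m)
    (t : ℝ) (ht : t ∈ Set.Ioo (τ j) (τ (j + 1))) :
    HasDerivAt (bspline τ d i)
      (((d : ℝ) - 1) *
        (bspline τ (d - 1) i t / (τ (i + d - 1) - τ i)
          - bspline τ (d - 1) (i + 1) t / (τ (i + d) - τ (i + 1)))) t :=
  bspline_deriv_general m d i j τ hτ hi hj t ht
end
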